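/- arXiv:2402.16826 — 3 statements merged into one kernel-verified Lean document; each statement's English description precedes it below -/
import Mathlib

section
/- Let b, c ∈ ℂ and let k ≥ 1 be an integer such that (b)_k ≠ 0, (c)_k ≠ 0, and (b+c)_k ≠ 0. Then the polynomial P_k(z) has degree exactly k and has k distinct roots in ℂ (i.e., P_k is separable: it has no multiple roots). -/
/-! Any polynomial whose coefficients obey the Gauss recurrence solves the hypergeometric equation,
and a nonzero solution of a second-order linear equation `A p'' + B p' = D p` has only simple roots
where `A` does not vanish: at a root of multiplicity `m ≥ 2`, `p'` and `p` are divisible by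
`(X - z) ^ (m - 1)` while `p''` has multiplicity exactly `m - 2`.  For `P_k`, the singular points
`0` and `1` of the equation are not roots, since `P_k(0) = 1` and, by Chu–Vandermonde,
`(c)_k P_k(1) = (b + c)_k`. -/

open Polynomial Finset

/-- The Gauss hypergeometric polynomial `₂F₁(-k, b; 1-k-c; z)` as a polynomial in `z`. -/
noncomputable def hypP (b c : ℂ) (k : ℕ) : Polynomial ℂ :=
  ∑ j ∈ Finset.range (k + 1),
    Polynomial.C ((ascPochhammer ℂ j).eval (-(k : ℂ)) * (ascPochhammer ℂ j).eval b /
      ((ascPochhammer ℂ j).eval (1 - (k : ℂ) - c) * (j.factorial : ℂ))) * Polynomial.X ^ j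

section Pochhammer

variable {R : Type*} [CommRing R]

theorem ascPochhammer_eval_neg_natCast (k j : ℕ) :
    (ascPochhammer R j).eval (-(k : R)) = (-1) ^ j * k.descFactorial j := by
  rw [ascPochhammer_eval_neg_eq_descPochhammer, descPochhammer_eval_eq_descFactorial]

theorem ascPochhammer_eval_add (x y : R) (k : ℕ) :
    (ascPochhammer R k).eval (x + y) = ∑ ij ∈ antidiagonal k,
      (k.choose ij.1 : R) * ((ascPochhammer R ij.1).eval x * (ascPochhammer R ij.2).eval y) := by
  induction k with
  | zero => simp
  | succ k ih =>
    rw [ascPochhammer_succ_eval, ih,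
      sum_antidiagonal_choose_succ_mul
        (fun i j => (ascPochhammer R i).eval x * (ascPochhammer R j).eval y) k,
      sum_mul, ← sum_add_distrib]
    refine sum_congr rfl fun ij hij => ?_
    rw [HasAntidiagonal.mem_antidiagonal] at hij
    have hcast : (ij.1 : R) + ij.2 = k := by rw [← Nat.cast_add, hij]
    rw [← Nat.choose_symm_of_eq_add hij.symm, ascPochhammer_succ_eval, ascPochhammer_succ_eval]
    linear_combination (-(k.choose ij.1 : R) * (ascPochhammer R ij.1).eval x *
      (ascPochhammer R ij.2).eval y) * hcast

/-- Splitting off the last `j` factors of `(c)_k` and reversing their order. -/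
theorem ascPochhammer_eval_eq_neg_one_pow_mul (c : R) {k j : ℕ} (hj : j ≤ k) :
    (ascPochhammer R k).eval c =
      (-1) ^ j * (ascPochhammer R j).eval (1 - k - c) * (ascPochhammer R (k - j)).eval c := by
  induction j with
  | zero => simp
  | succ j ih =>
    have hsub : k - j = k - (j + 1) + 1 := by omega
    have hcast : ((k - (j + 1) : ℕ) : R) = k - j - 1 := by push_cast [Nat.cast_sub hj]; ring
    rw [ih (by omega), hsub, ascPochhammer_succ_eval, ascPochhammer_succ_eval, hcast]
    ring

end Pochhammer

section HypergeometricTerm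

variable {K : Type*} [Field K]

noncomputable def hypergeometricTerm (α β γ : K) (j : ℕ) : K :=
  (ascPochhammer K j).eval α * (ascPochhammer K j).eval β /
    ((ascPochhammer K j).eval γ * (j.factorial : K))

theorem hypergeometricTerm_zero (α β γ : K) : hypergeometricTerm α β γ 0 = 1 := by
  simp [hypergeometricTerm]

theorem hypergeometricTerm_neg_natCast_of_lt (β γ : K) {k j : ℕ} (h : k < j) :
    hypergeometricTerm (-(k : K)) β γ j = 0 := by
  rw [hypergeometricTerm, ascPochhammer_eval_neg_coe_nat_of_lt h, zero_mul, zero_div]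

theorem hypergeometricTerm_succ [CharZero K] (α β : K) {γ : K} {n : ℕ}
    (hγ : (ascPochhammer K (n + 1)).eval γ ≠ 0) :
    ((n : K) + 1) * (n + γ) * hypergeometricTerm α β γ (n + 1) =
      (n + α) * (n + β) * hypergeometricTerm α β γ n := by
  rw [ascPochhammer_succ_eval, mul_ne_zero_iff] at hγ
  obtain ⟨hγn, hγ_add⟩ := hγ
  have hn1 : (n : K) + 1 ≠ 0 := by exact_mod_cast n.succ_ne_zero
  have hfac : (n.factorial : K) ≠ 0 := by exact_mod_cast n.factorial_ne_zero
  rw [hypergeometricTerm, hypergeometricTerm, ascPochhammer_succ_eval, ascPochhammer_succ_eval,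
    ascPochhammer_succ_eval, Nat.factorial_succ]
  push_cast
  field_simp
  ring

end HypergeometricTerm

theorem hypergeometric_ode_of_coeff_recurrence {R : Type*} [CommRing R] (p : R[X]) {α β γ : R}
    (h : ∀ n : ℕ,
      ((n : R) + 1) * (n + γ) * p.coeff (n + 1) = (n + α) * (n + β) * p.coeff n) :
    X * (1 - X) * derivative (derivative p) + (C γ - C (α + β + 1) * X) * derivative p =
      C (α * β) * p := by
  rw [← sub_eq_zero]
  ext n
  rcases n with _ | _ | n
  all_goals
    simp only [coeff_sub, coeff_add, sub_mul, mul_sub, mul_one, mul_assoc, coeff_X_mul,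
      mul_coeff_zero, coeff_X_zero, coeff_C_zero, zero_mul, coeff_C_mul, coeff_derivative,
      coeff_zero]
  · have := h 0
    push_cast at this ⊢
    linear_combination this
  · have := h 1
    push_cast at this ⊢
    linear_combination this
  · have := h (n + 2)
    push_cast at this ⊢
    linear_combination this

theorem rootMultiplicity_le_one_of_ode {K : Type*} [Field K] [CharZero K] {p A B D : K[X]}
    {z : K} (hode : A * derivative (derivative p) + B * derivative p = D * p) (hp : p ≠ 0)
    (hA : A.eval z ≠ 0) : p.rootMultiplicity z ≤ 1 := by
  by_contra! hm
  set m := p.rootMultiplicity z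
  have hp' : (derivative p).rootMultiplicity z = m - 1 :=
    derivative_rootMultiplicity_of_root ((rootMultiplicity_pos hp).mp (by omega))
  have hp'_root : (derivative p).IsRoot z := isRoot_iterate_derivative_of_lt_rootMultiplicity hm
  have hp'' : (derivative (derivative p)).rootMultiplicity z = m - 2 := by
    rw [derivative_rootMultiplicity_of_root hp'_root, hp']
    omega
  have hp''_ne : derivative (derivative p) ≠ 0 := by
    have hp'_ne : derivative p ≠ 0 := fun h => by simp [h] at hp'; omega
    rw [Ne, derivative_eq_zero, ← Ne, ← pos_iff_ne_zero, natDegree_pos_iff_degree_pos]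
    exact degree_pos_of_root hp'_ne hp'_root
  have hA_ne : A ≠ 0 := by rintro rfl; simp at hA
  have hdvd : (X - C z) ^ (m - 1) ∣ A * derivative (derivative p) := by
    rw [eq_sub_of_add_eq hode]
    refine dvd_sub (dvd_mul_of_dvd_right ?_ _) (dvd_mul_of_dvd_right ?_ _)
    · exact (pow_dvd_pow _ (m.sub_le 1)).trans (pow_rootMultiplicity_dvd p z)
    · exact hp' ▸ pow_rootMultiplicity_dvd _ z
  have hle := (le_rootMultiplicity_iff (mul_ne_zero hA_ne hp''_ne)).mpr hdvd
  rw [rootMultiplicity_mul (mul_ne_zero hA_ne hp''_ne), rootMultiplicity_eq_zero hA, hp''] at hle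
  omega

section HypP

variable {b c : ℂ} {k : ℕ}

theorem coeff_hypP (n : ℕ) :
    (hypP b c k).coeff n = hypergeometricTerm (-(k : ℂ)) b (1 - k - c) n := by
  simp only [hypP, finsetSum_coeff, coeff_C_mul, coeff_X_pow, mul_ite, mul_one, mul_zero,
    sum_ite_eq, mem_range]
  split_ifs with h
  · rfl
  · exact (hypergeometricTerm_neg_natCast_of_lt _ _ (by omega)).symm

theorem ascPochhammer_eval_one_sub_sub_ne_zero (hc : (ascPochhammer ℂ k).eval c ≠ 0) {j : ℕ}
    (hj : j ≤ k) : (ascPochhammer ℂ j).eval (1 - k - c) ≠ 0 := fun h =>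
  hc (by rw [ascPochhammer_eval_eq_neg_one_pow_mul c hj, h, mul_zero, zero_mul])

theorem coeff_hypP_recurrence (hc : (ascPochhammer ℂ k).eval c ≠ 0) (n : ℕ) :
    ((n : ℂ) + 1) * (n + (1 - k - c)) * (hypP b c k).coeff (n + 1) =
      (n + -(k : ℂ)) * (n + b) * (hypP b c k).coeff n := by
  simp only [coeff_hypP]
  rcases lt_or_ge n k with hn | hn
  · exact hypergeometricTerm_succ _ _ (ascPochhammer_eval_one_sub_sub_ne_zero hc hn)
  · rw [hypergeometricTerm_neg_natCast_of_lt _ _ (by omega)]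
    rcases hn.eq_or_lt with rfl | hn
    · ring
    · rw [hypergeometricTerm_neg_natCast_of_lt _ _ hn]
      ring

theorem natDegree_hypP (hb : (ascPochhammer ℂ k).eval b ≠ 0)
    (hc : (ascPochhammer ℂ k).eval c ≠ 0) : (hypP b c k).natDegree = k := by
  have hlead : (hypP b c k).coeff k ≠ 0 := by
    rw [coeff_hypP, hypergeometricTerm, ascPochhammer_eval_neg_natCast, Nat.descFactorial_self]
    have := ascPochhammer_eval_one_sub_sub_ne_zero hc le_rfl
    have := k.factorial_ne_zero
    simp_all
  refine le_antisymm (natDegree_le_iff_coeff_eq_zero.mpr fun n hn => ?_)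
    (le_natDegree_of_ne_zero hlead)
  rw [coeff_hypP]
  exact hypergeometricTerm_neg_natCast_of_lt _ _ (by exact_mod_cast hn)

theorem eval_zero_hypP : (hypP b c k).eval 0 = 1 := by
  rw [← coeff_zero_eq_eval_zero, coeff_hypP, hypergeometricTerm_zero]

theorem hypergeometricTerm_mul_ascPochhammer_eval (hc : (ascPochhammer ℂ k).eval c ≠ 0)
    {j : ℕ} (hj : j ≤ k) :
    hypergeometricTerm (-(k : ℂ)) b (1 - k - c) j * (ascPochhammer ℂ k).eval c =
      k.choose j * ((ascPochhammer ℂ j).eval b * (ascPochhammer ℂ (k - j)).eval c) := by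
  have hden := ascPochhammer_eval_one_sub_sub_ne_zero hc hj
  have hfac : (j.factorial : ℂ) ≠ 0 := by exact_mod_cast j.factorial_ne_zero
  have hsign : ((-1 : ℂ)) ^ j * (-1) ^ j = 1 := by rw [← mul_pow]; norm_num
  rw [hypergeometricTerm, ascPochhammer_eval_eq_neg_one_pow_mul c hj,
    ascPochhammer_eval_neg_natCast, Nat.descFactorial_eq_factorial_mul_choose]
  push_cast
  field_simp
  linear_combination (k.choose j * (ascPochhammer ℂ j).eval b *
    (ascPochhammer ℂ (k - j)).eval c) * hsign

theorem eval_one_hypP_mul (hc : (ascPochhammer ℂ k).eval c ≠ 0) :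
    (hypP b c k).eval 1 * (ascPochhammer ℂ k).eval c = (ascPochhammer ℂ k).eval (b + c) := by
  simp only [hypP, eval_finsetSum, eval_mul, eval_C, eval_pow, eval_X, one_pow, mul_one]
  rw [ascPochhammer_eval_add, Nat.sum_antidiagonal_eq_sum_range_succ_mk, sum_mul]
  refine sum_congr rfl fun j hj => ?_
  exact hypergeometricTerm_mul_ascPochhammer_eval hc (by simpa [Nat.lt_succ_iff] using hj)

theorem hypP_ne_zero : hypP b c k ≠ 0 := by
  intro h
  simpa [h] using (eval_zero_hypP : (hypP b c k).eval 0 = 1)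

theorem rootMultiplicity_hypP_le_one (hc : (ascPochhammer ℂ k).eval c ≠ 0)
    (hbc : (ascPochhammer ℂ k).eval (b + c) ≠ 0) (z : ℂ) :
    (hypP b c k).rootMultiplicity z ≤ 1 := by
  by_cases hz0 : z = 0
  · rw [hz0, rootMultiplicity_eq_zero (by simp [eval_zero_hypP])]
    exact zero_le_one
  by_cases hz1 : z = 1
  · have hP1 : (hypP b c k).eval 1 ≠ 0 := fun h =>
      hbc (by rw [← eval_one_hypP_mul hc, h, zero_mul])
    rw [hz1, rootMultiplicity_eq_zero hP1]
    exact zero_le_one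
  refine rootMultiplicity_le_one_of_ode
    (hypergeometric_ode_of_coeff_recurrence _ (coeff_hypP_recurrence hc)) hypP_ne_zero ?_
  simp [sub_eq_zero, hz0, Ne.symm hz1]

end HypP

theorem stmt_2_general (b c : ℂ) (k : ℕ)
    (hb : (ascPochhammer ℂ k).eval b ≠ 0)
    (hc : (ascPochhammer ℂ k).eval c ≠ 0)
    (hbc : (ascPochhammer ℂ k).eval (b + c) ≠ 0) :
    (hypP b c k).natDegree = k ∧ (hypP b c k).roots.toFinset.card = k ∧
      Squarefree (hypP b c k) := by
  have hnodup : (hypP b c k).roots.Nodup := Multiset.nodup_iff_count_le_one.mpr fun z => by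
    rw [count_roots]
    exact rootMultiplicity_hypP_le_one hc hbc z
  have hsep : (hypP b c k).Separable :=
    (nodup_roots_iff_of_splits hypP_ne_zero (IsAlgClosed.splits _)).mp hnodup
  refine ⟨natDegree_hypP hb hc, ?_, hsep.squarefree⟩
  rw [Multiset.toFinset_card_of_nodup hnodup, splits_iff_card_roots.mp (IsAlgClosed.splits _),
    natDegree_hypP hb hc]

/-- `P k` has degree exactly `k` and `k` distinct roots, i.e. it has no multiple roots. -/
theorem stmt_2 (b c : ℂ) (k : ℕ) (hk : 1 ≤ k)
    (hb : (ascPochhammer ℂ k).eval b ≠ 0)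
    (hc : (ascPochhammer ℂ k).eval c ≠ 0)
    (hbc : (ascPochhammer ℂ k).eval (b + c) ≠ 0) :
    (hypP b c k).natDegree = k ∧ (hypP b c k).roots.toFinset.card = k ∧
      Squarefree (hypP b c k) :=
  stmt_2_general b c k hb hc hbc
end

section
/- Let c ∈ ℂ and let k ≥ 1 be an integer such that (c)_k ≠ 0 and (2c)_k ≠ 0. Then the polynomials Q_k(z) and Q_{k−1}(z) have no common root in ℂ. -/
/-!
The `Q_k` satisfy the three-term recurrence `Q_{m+2} = Q_{m+1} - λ_m z Q_m` with
`λ_m = (m+1)(2c+m) / (4(c+m)(c+m+1))`; comparing coefficients of `z^{j+1}`, this is a rational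
identity in `m`, `j`, `c` after the Pochhammer symbols are shifted to a common argument.
The hypotheses make every `λ_m` with `m + 2 ≤ k` nonzero. Since `Q_m(0) = 1`, a common root
`z ≠ 0` of `Q_{m+2}` and `Q_{m+1}` is also a root of `Q_m`; descending, it would be a root of
`Q_0 = 1`.
-/

open Polynomial Finset

/-- The Gauss hypergeometric polynomial `₂F₁(-k/2, -(k-1)/2; 1-k-c; z)` as a polynomial in `z`,
of degree `⌊k/2⌋`. -/
noncomputable def hypQ (c : ℂ) (k : ℕ) : Polynomial ℂ :=
  ∑ j ∈ Finset.range (k / 2 + 1),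
    Polynomial.C ((ascPochhammer ℂ j).eval (-(k : ℂ) / 2) *
        (ascPochhammer ℂ j).eval (-((k : ℂ) - 1) / 2) /
      ((ascPochhammer ℂ j).eval (1 - (k : ℂ) - c) * (j.factorial : ℂ))) * Polynomial.X ^ j

section Pochhammer

variable {R : Type*}

lemma ascPochhammer_eval_ne_zero_of_le [CommSemiring R] {n m : ℕ} {r : R}
    (h : (ascPochhammer R n).eval r ≠ 0) (hmn : m ≤ n) : (ascPochhammer R m).eval r ≠ 0 := by
  obtain ⟨l, rfl⟩ := Nat.exists_eq_add_of_le hmn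
  rw [← ascPochhammer_mul, eval_mul] at h
  exact left_ne_zero_of_mul h

lemma add_natCast_ne_zero_of_ascPochhammer_eval_ne_zero [CommRing R] [IsDomain R] {n i : ℕ}
    {r : R} (h : (ascPochhammer R n).eval r ≠ 0) (hi : i < n) : r + i ≠ 0 := fun h0 ↦
  h ((ascPochhammer_eval_eq_zero_iff n r).2 ⟨i, hi, eq_neg_of_add_eq_zero_right h0⟩)

lemma ascPochhammer_succ_eval_eq_mul_eval_add_one [CommSemiring R] (n : ℕ) (r : R) :
    (ascPochhammer R (n + 1)).eval r = r * (ascPochhammer R n).eval (r + 1) := by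
  simp [ascPochhammer_succ_left, eval_comp]

end Pochhammer

noncomputable def hypQCoeff (c : ℂ) (k j : ℕ) : ℂ :=
  (ascPochhammer ℂ j).eval (-(k : ℂ) / 2) * (ascPochhammer ℂ j).eval (-((k : ℂ) - 1) / 2) /
    ((ascPochhammer ℂ j).eval (1 - (k : ℂ) - c) * (j.factorial : ℂ))

@[simp]
lemma hypQCoeff_zero_right (c : ℂ) (k : ℕ) : hypQCoeff c k 0 = 1 := by
  simp [hypQCoeff]

lemma hypQCoeff_eq_zero_of_lt (c : ℂ) {k j : ℕ} (h : k < 2 * j) : hypQCoeff c k j = 0 := by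
  unfold hypQCoeff
  rcases Nat.even_or_odd' k with ⟨t, rfl | rfl⟩
  · rw [show -((2 * t : ℕ) : ℂ) / 2 = -(t : ℂ) by push_cast; ring,
      ascPochhammer_eval_neg_coe_nat_of_lt (by omega), zero_mul, zero_div]
  · rw [show -(((2 * t + 1 : ℕ) : ℂ) - 1) / 2 = -(t : ℂ) by push_cast; ring,
      ascPochhammer_eval_neg_coe_nat_of_lt (by omega), mul_zero, zero_div]

lemma hypQ_eq_sum (c : ℂ) {k N : ℕ} (hN : k / 2 < N) :
    hypQ c k = ∑ j ∈ range N, C (hypQCoeff c k j) * X ^ j := by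
  change ∑ j ∈ range (k / 2 + 1), C (hypQCoeff c k j) * X ^ j = _
  refine sum_subset (range_subset_range.2 hN) fun j _ hj ↦ ?_
  rw [hypQCoeff_eq_zero_of_lt c (by simp only [mem_range] at hj; omega), C_0, zero_mul]

lemma hypQ_zero (c : ℂ) : hypQ c 0 = 1 := by
  simp [hypQ_eq_sum c (k := 0) (N := 1) zero_lt_one]

lemma eval_zero_hypQ (c : ℂ) (k : ℕ) : (hypQ c k).eval 0 = 1 := by
  rw [hypQ_eq_sum c (Nat.lt_succ_self _), sum_range_succ', eval_add, eval_finsetSum]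
  simp

noncomputable def hypQRecCoeff (c : ℂ) (m : ℕ) : ℂ :=
  ((m : ℂ) + 1) * (2 * c + m) / (4 * (c + m) * (c + m + 1))

lemma hypQRecCoeff_ne_zero {c : ℂ} {m : ℕ} (hc : (ascPochhammer ℂ (m + 2)).eval c ≠ 0)
    (h2c : (ascPochhammer ℂ (m + 1)).eval (2 * c) ≠ 0) : hypQRecCoeff c m ≠ 0 := by
  have h₀ := add_natCast_ne_zero_of_ascPochhammer_eval_ne_zero hc (i := m) (by omega)
  have h₁ := add_natCast_ne_zero_of_ascPochhammer_eval_ne_zero hc (i := m + 1) (by omega)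
  have h₂ := add_natCast_ne_zero_of_ascPochhammer_eval_ne_zero h2c (i := m) (by omega)
  push_cast [← add_assoc] at h₁
  unfold hypQRecCoeff
  exact div_ne_zero (mul_ne_zero (Nat.cast_add_one_ne_zero m) h₂)
    (mul_ne_zero (mul_ne_zero (by norm_num) h₀) h₁)

lemma hypQCoeff_add_two_succ {c : ℂ} {m j : ℕ} (hc : (ascPochhammer ℂ (m + 2)).eval c ≠ 0)
    (hj : 2 * j ≤ m) :
    hypQCoeff c (m + 2) (j + 1) =
      hypQCoeff c (m + 1) (j + 1) - hypQRecCoeff c m * hypQCoeff c m j := by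
  have hcm := add_natCast_ne_zero_of_ascPochhammer_eval_ne_zero hc (i := m) (by omega)
  have hcm₁ := add_natCast_ne_zero_of_ascPochhammer_eval_ne_zero hc (i := m + 1) (by omega)
  have hcmj := add_natCast_ne_zero_of_ascPochhammer_eval_ne_zero hc (i := m - j) (by omega)
  push_cast [Nat.cast_sub (show j ≤ m by omega), ← add_assoc] at hcm₁ hcmj
  have hcm' : -(m : ℂ) - c ≠ 0 := by contrapose! hcm; linear_combination -hcm
  have hcm₁' : 1 - ((m : ℂ) + 2) - c ≠ 0 := by contrapose! hcm₁; linear_combination -hcm₁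
  have hcmj' : -(m : ℂ) - c + j ≠ 0 := by contrapose! hcmj; linear_combination -hcmj
  have hPD : (ascPochhammer ℂ j).eval (-(m : ℂ) - c) * (-(m : ℂ) - c + j) =
      (-(m : ℂ) - c) * (ascPochhammer ℂ j).eval (1 - (m : ℂ) - c) := by
    rw [← ascPochhammer_succ_eval, ascPochhammer_succ_eval_eq_mul_eval_add_one,
      show -(m : ℂ) - c + 1 = 1 - m - c by ring]
  unfold hypQCoeff hypQRecCoeff
  rw [ascPochhammer_succ_eval_eq_mul_eval_add_one, ascPochhammer_succ_eval_eq_mul_eval_add_one,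
    ascPochhammer_succ_eval_eq_mul_eval_add_one, ascPochhammer_succ_eval_eq_mul_eval_add_one,
    ascPochhammer_succ_eval, ascPochhammer_succ_eval, Nat.factorial_succ]
  push_cast
  rw [show -((m : ℂ) + 2) / 2 + 1 = -m / 2 by ring,
    show -((m : ℂ) + 2 - 1) / 2 = -(m + 1) / 2 by ring,
    show -((m : ℂ) + 1) / 2 + 1 = -(m - 1) / 2 by ring,
    show -((m : ℂ) + 1 - 1) / 2 = -m / 2 by ring,
    show 1 - ((m : ℂ) + 2) - c + 1 = -m - c by ring,
    show 1 - ((m : ℂ) + 1) - c = -m - c by ring]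
  set P := (ascPochhammer ℂ j).eval (-(m : ℂ) - c)
  set D := (ascPochhammer ℂ j).eval (1 - (m : ℂ) - c)
  -- `P` and `D` vanish together, and then both sides are junk divisions by zero.
  rcases eq_or_ne D 0 with hD | hD
  · have hP : P = 0 := by
      rw [hD, mul_zero] at hPD
      exact (mul_eq_zero.1 hPD).resolve_right hcmj'
    simp [hP, hD]
  · have hP : P ≠ 0 := left_ne_zero_of_mul (hPD ▸ mul_ne_zero hcm' hD)
    rw [show D = P * (-m - c + j) / (-m - c) by rw [hPD]; field_simp]
    field_simp
    ring

lemma hypQ_add_two {c : ℂ} {m : ℕ} (hc : (ascPochhammer ℂ (m + 2)).eval c ≠ 0) :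
    hypQ c (m + 2) = hypQ c (m + 1) - C (hypQRecCoeff c m) * X * hypQ c m := by
  have hterm : ∀ j ∈ range (m / 2 + 1), C (hypQCoeff c (m + 2) (j + 1)) * X ^ (j + 1) =
      C (hypQCoeff c (m + 1) (j + 1)) * X ^ (j + 1) -
        C (hypQRecCoeff c m) * X * (C (hypQCoeff c m j) * X ^ j) := fun j hj ↦ by
    rw [hypQCoeff_add_two_succ hc (by simp only [mem_range] at hj; omega), C_sub, C_mul]
    ring
  rw [hypQ_eq_sum c (k := m + 2) (N := m / 2 + 2) (by omega),
    hypQ_eq_sum c (k := m + 1) (N := m / 2 + 2) (by omega),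
    hypQ_eq_sum c (k := m) (N := m / 2 + 1) (by omega),
    sum_range_succ' (fun j ↦ C (hypQCoeff c (m + 2) j) * X ^ j),
    sum_range_succ' (fun j ↦ C (hypQCoeff c (m + 1) j) * X ^ j),
    sum_congr rfl hterm, sum_sub_distrib, mul_sum, hypQCoeff_zero_right, hypQCoeff_zero_right]
  ring

theorem eval_hypQ_sub_one_ne_zero {c z : ℂ} {k : ℕ} (hc : (ascPochhammer ℂ k).eval c ≠ 0)
    (h2c : (ascPochhammer ℂ k).eval (2 * c) ≠ 0) (hz : z ≠ 0) :
    ∀ m ≤ k, (hypQ c m).eval z = 0 → (hypQ c (m - 1)).eval z ≠ 0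
  | 0, _, h => by simp [hypQ_zero] at h
  | 1, _, _ => by simp [hypQ_zero]
  | m + 2, hm, h₂ => fun h₁ ↦ by
    have h₁ : (hypQ c (m + 1)).eval z = 0 := h₁
    have hc' := ascPochhammer_eval_ne_zero_of_le hc hm
    have hrec : hypQRecCoeff c m * z * (hypQ c m).eval z = 0 := by
      simpa [h₁, h₂] using congrArg (eval z) (hypQ_add_two hc')
    have hrec_ne := hypQRecCoeff_ne_zero hc' (ascPochhammer_eval_ne_zero_of_le h2c (by omega))
    exact eval_hypQ_sub_one_ne_zero hc h2c hz (m + 1) (by omega) h₁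
      (by simpa [hrec_ne, hz] using hrec)

theorem stmt_4_general (c : ℂ) (k : ℕ)
    (hc : (ascPochhammer ℂ k).eval c ≠ 0)
    (h2c : (ascPochhammer ℂ k).eval (2 * c) ≠ 0) :
    ∀ z : ℂ, ¬ ((hypQ c k).eval z = 0 ∧ (hypQ c (k - 1)).eval z = 0) := by
  rintro z ⟨hk, hk₁⟩
  have hz : z ≠ 0 := by
    rintro rfl
    simp [eval_zero_hypQ] at hk
  exact eval_hypQ_sub_one_ne_zero hc h2c hz k le_rfl hk hk₁

/-- `Q k` and `Q (k-1)` have no common root. -/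
theorem stmt_4 (c : ℂ) (k : ℕ) (hk : 1 ≤ k)
    (hc : (ascPochhammer ℂ k).eval c ≠ 0)
    (h2c : (ascPochhammer ℂ k).eval (2 * c) ≠ 0) :
    ∀ z : ℂ, ¬ ((hypQ c k).eval z = 0 ∧ (hypQ c (k - 1)).eval z = 0) :=
  stmt_4_general c k hc h2c
end

section
/- Let a, α, β ∈ ℂ with α ≠ 0, and let k ∈ ℕ satisfy (a)_k ≠ 0. Then the coefficient g_k = ∑_{j=0}^{⌊k/2⌋} ((−1)^{k−j} (a)_{k−j} α^{k−2j} β^j) / ((k−2j)! · j!) of x^k in the power series expansion of (1+αx+βx²)^{−a} admits the hypergeometric expression g_k = ((−α)^k (a)_k / k!) · ∑_{j=0}^{⌊k/2⌋} ((−k/2)_j (−(k−1)/2)_j / ((1−k−a)_j · j!)) (4β/α²)^j, i.e., g_k = ((−α)^k (a)_k/k!) · 2F1(−k/2, −(k−1)/2; 1−k−a; 4β/α²). -/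
/-!
The identity holds term by term. Write `k = m + 2j`. Then `(a)_k = (a)_{m+j} (a+m+j)_j`, the
reflection formula gives `(1-k-a)_j = (-1)^j (a+m+j)_j`, and the duplication formula
`4^j (x/2)_j ((x+1)/2)_j = (x)_{2j}` at `x = -k` gives `4^j (-k/2)_j (-(k-1)/2)_j = k!/(k-2j)!`.
Substituting these into the `j`-th hypergeometric term yields the `j`-th summand of `g_k`.
-/

open Finset Polynomial

theorem ascPochhammer_eval_add_s10 {S : Type*} [CommSemiring S] (n m : ℕ) (x : S) :
    (ascPochhammer S (n + m)).eval x =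
      (ascPochhammer S n).eval x * (ascPochhammer S m).eval (x + n) := by
  rw [← ascPochhammer_mul, eval_mul, eval_comp, eval_add, eval_X, eval_natCast]

theorem ascPochhammer_eval_one_sub_sub {R : Type*} [CommRing R] (n : ℕ) (y : R) :
    (ascPochhammer R n).eval (1 - y - n) = (-1) ^ n * (ascPochhammer R n).eval y := by
  rw [show 1 - y - n = -(y + n - 1) by ring, ascPochhammer_eval_neg_eq_descPochhammer,
    descPochhammer_eval_eq_ascPochhammer, show y + n - 1 - n + 1 = y by ring]

theorem ascPochhammer_eval_two_mul {K : Type*} [Field K] [NeZero (2 : K)] (n : ℕ) (x : K) :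
    4 ^ n * (ascPochhammer K n).eval (x / 2) * (ascPochhammer K n).eval ((x + 1) / 2) =
      (ascPochhammer K (2 * n)).eval x := by
  induction n with
  | zero => simp
  | succ n ih =>
    rw [show 2 * (n + 1) = 2 * n + 1 + 1 by ring, ascPochhammer_succ_eval (2 * n + 1),
      ascPochhammer_succ_eval (2 * n), ← ih, ascPochhammer_succ_eval, ascPochhammer_succ_eval]
    push_cast
    field_simp
    ring

theorem ascPochhammer_eval_neg_natCast_mul_factorial {R : Type*} [CommRing R] {m k : ℕ}
    (h : m ≤ k) :
    (ascPochhammer R m).eval (-(k : R)) * ((k - m).factorial : R) = (-1) ^ m * k.factorial := by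
  rw [ascPochhammer_eval_neg_eq_descPochhammer, descPochhammer_eval_eq_descFactorial,
    ← Nat.factorial_mul_descFactorial h]
  push_cast
  ring

theorem four_pow_mul_ascPochhammer_eval_neg_half_mul_factorial {K : Type*} [Field K]
    [NeZero (2 : K)] {j k : ℕ} (h : 2 * j ≤ k) :
    4 ^ j * (ascPochhammer K j).eval (-(k : K) / 2) *
        (ascPochhammer K j).eval (-((k : K) - 1) / 2) * ((k - 2 * j).factorial : K) =
      k.factorial := by
  rw [show -((k : K) - 1) / 2 = (-k + 1) / 2 by ring, ascPochhammer_eval_two_mul,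
    ascPochhammer_eval_neg_natCast_mul_factorial h, pow_mul]
  simp

theorem ascPochhammer_coeff_term_eq_hypergeometric_term {K : Type*} [Field K] [CharZero K]
    (a α β : K) (hα : α ≠ 0) (m j : ℕ) (ha : (ascPochhammer K (m + 2 * j)).eval a ≠ 0) :
    (-1) ^ (m + j) * (ascPochhammer K (m + j)).eval a * α ^ m * β ^ j /
        ((m.factorial : K) * j.factorial) =
      (-α) ^ (m + 2 * j) * (ascPochhammer K (m + 2 * j)).eval a / ((m + 2 * j).factorial : K) *
        ((ascPochhammer K j).eval (-((m + 2 * j : ℕ) : K) / 2) *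
            (ascPochhammer K j).eval (-(((m + 2 * j : ℕ) : K) - 1) / 2) /
          ((ascPochhammer K j).eval (1 - ((m + 2 * j : ℕ) : K) - a) * j.factorial) *
          (4 * β / α ^ 2) ^ j) := by
  have hsplit : (ascPochhammer K (m + 2 * j)).eval a =
      (ascPochhammer K (m + j)).eval a * (ascPochhammer K j).eval (a + (m + j : ℕ)) := by
    rw [← ascPochhammer_eval_add_s10, add_assoc, two_mul]
  have hflip := ascPochhammer_eval_one_sub_sub j (a + (m + j : ℕ))
  have hdup := four_pow_mul_ascPochhammer_eval_neg_half_mul_factorial (K := K)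
    (le_add_self : 2 * j ≤ m + 2 * j)
  rw [Nat.add_sub_cancel] at hdup
  rw [show 1 - ((m + 2 * j : ℕ) : K) - a = 1 - (a + (m + j : ℕ)) - j by push_cast; ring, hflip,
    hsplit]
  have hfac : ((m + 2 * j).factorial : K) ≠ 0 := Nat.cast_ne_zero.mpr (Nat.factorial_ne_zero _)
  rw [← hdup] at hfac ⊢
  simp only [ne_eq, mul_eq_zero, not_or] at hfac
  obtain ⟨⟨⟨-, hP⟩, hQ⟩, -⟩ := hfac
  have hB := right_ne_zero_of_mul (hsplit ▸ ha)
  generalize (ascPochhammer K j).eval (-((m + 2 * j : ℕ) : K) / 2) = P at *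
  generalize (ascPochhammer K j).eval (-(((m + 2 * j : ℕ) : K) - 1) / 2) = Q at *
  rw [div_pow, pow_add (-α), pow_mul (-α), neg_sq]
  field_simp
  linear_combination (-1) ^ m * (ascPochhammer K (m + j)).eval a * α ^ m * β ^ j * 4 ^ j /
    (m.factorial * j.factorial : K) * (even_two_mul j).neg_one_pow (α := K)

/-- The coefficient `g_k` of `x^k` in `(1 + αx + βx²)^{-a}` has the hypergeometric
expression `g_k = ((-α)^k (a)_k / k!) · ₂F₁(-k/2, -(k-1)/2; 1-k-a; 4β/α²)`. -/
theorem stmt_10 (a α β : ℂ) (hα : α ≠ 0) (k : ℕ) (ha : (ascPochhammer ℂ k).eval a ≠ 0) :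
    ∑ j ∈ Finset.range (k / 2 + 1),
        (-1) ^ (k - j) * (ascPochhammer ℂ (k - j)).eval a * α ^ (k - 2 * j) * β ^ j /
          (((k - 2 * j).factorial : ℂ) * (j.factorial : ℂ))
      = (-α) ^ k * (ascPochhammer ℂ k).eval a / (k.factorial : ℂ) *
        ∑ j ∈ Finset.range (k / 2 + 1),
          (ascPochhammer ℂ j).eval (-(k : ℂ) / 2) *
              (ascPochhammer ℂ j).eval (-((k : ℂ) - 1) / 2) /
            ((ascPochhammer ℂ j).eval (1 - (k : ℂ) - a) * (j.factorial : ℂ)) *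
            (4 * β / α ^ 2) ^ j := by
  rw [mul_sum]
  refine sum_congr rfl fun j hj => ?_
  obtain ⟨m, rfl⟩ : ∃ m, k = m + 2 * j := ⟨k - 2 * j, by grind⟩
  rw [show m + 2 * j - j = m + j by omega, Nat.add_sub_cancel]
  exact ascPochhammer_coeff_term_eq_hypergeometric_term a α β hα m j ha
end
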